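/- Let n be odd. Then the extreme points of the convex hull of the degree-count vectors { (n_0(g), …, n_{n-1}(g)) : g a simple graph on n vertices } are exactly: the vectors n·e_l for 0 ≤ l < n with l even, and the vectors (n-1)·e_k + e_l for 0 ≤ k, l < n with k odd and l even. -/

import Mathlib

/-- The degree of vertex `v` in `g`. -/
noncomputable def dkDeg {n : ℕ} (g : SimpleGraph (Fin n)) (v : Fin n) : ℕ :=
  Nat.card (g.neighborSet v)

/-- `n_k(g)`: the number of vertices of `g` of degree `k`. -/
noncomputable def dkNk {n : ℕ} (g : SimpleGraph (Fin n)) (k : ℕ) : ℕ :=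
  Nat.card {v : Fin n // dkDeg g v = k}

/-- The degree-count vector of `g`, as a point of `ℝⁿ`. -/
noncomputable def dkVec {n : ℕ} (g : SimpleGraph (Fin n)) : Fin n → ℝ :=
  fun k => (dkNk g (k : ℕ) : ℝ)

/-!
Every degree-count vector lies in the polytope `Q = {x ≥ 0, ∑ xᵢ = n, ∑_{i odd} xᵢ ≤ n - 1}`:
the coordinates count all `n` vertices, and by the handshake lemma the number of odd-degree
vertices is even, hence at most `n - 1` when `n` is odd. Moreover `Q` is the convex hull of the
points `n·e_l` and `(n-1)·e_k + e_l` (`k` odd, `l` even), and each of them is the degree-count vector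
of a graph: an `l`-regular circulant graph, resp. a `k`-regular circulant graph on `n - 1` vertices
from which `l / 2` edges of a perfect matching are split off to a new vertex. So the convex hull of
the degree-count vectors is `Q`, and those points, which are exposed points of `Q`, are exactly its
extreme points.
-/

open Finset SimpleGraph

lemma Nat.card_subtype_option {V : Type*} [Finite V] (p : Option V → Prop) [DecidablePred p] :
    Nat.card {x // p x} = Nat.card {a // p (some a)} + if p none then 1 else 0 := by
  have := Fintype.ofFinite V
  simp only [Nat.card_eq_fintype_card, Fintype.card_subtype, card_filter, Fintype.sum_option]
  ring

lemma eq_zero_of_sum_le_sum {ι : Type*} [Fintype ι] [DecidableEq ι] {y : ι → ℝ}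
    (hy : ∀ i, 0 ≤ y i) {t : Finset ι} (h : ∑ i, y i ≤ ∑ i ∈ t, y i) {i : ι} (hi : i ∉ t) :
    y i = 0 := by
  have hcompl : ∑ j ∈ tᶜ, y j = 0 := by
    have := sum_compl_add_sum t y
    linarith [sum_nonneg fun j (_ : j ∈ tᶜ) => hy j]
  exact (sum_eq_zero_iff_of_nonneg fun j _ => hy j).mp hcompl i (mem_compl.mpr hi)

lemma mem_convexHull_piSingle {ι : Type*} [Fintype ι] [DecidableEq ι] (P : ι → Prop)
    {c : ℝ} (hc : 0 < c) {y : ι → ℝ} (hy : ∀ i, 0 ≤ y i) (hP : ∀ i, ¬ P i → y i = 0)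
    (hsum : ∑ i, y i = c) :
    y ∈ convexHull ℝ {z | ∃ i, P i ∧ z = Pi.single i c} := by
  classical
  have hsupp : ∑ i ∈ univ.filter P, y i = ∑ i, y i :=
    sum_filter_of_ne fun i _ hi => by_contra fun h => hi (hP i h)
  have hy_eq : y = ∑ i ∈ univ.filter P, (y i / c) • Pi.single i c := by
    ext j
    simp only [Finset.sum_apply, Pi.smul_apply, Pi.single_apply, smul_eq_mul, mul_ite,
      mul_zero, sum_ite_eq, mem_filter, mem_univ, true_and]
    split_ifs with h
    · field_simp
    · exact hP j h
  rw [hy_eq]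
  refine (convex_convexHull ℝ _).sum_mem (fun i _ => div_nonneg (hy i) hc.le) ?_
    fun i hi => subset_convexHull ℝ _ ⟨i, (mem_filter.mp hi).2, rfl⟩
  rw [← sum_div, hsupp, hsum, div_self hc.ne']

lemma injOn_intCast_Icc {N : ℕ} {a b : ℤ} (h : b - a < N) :
    Set.InjOn (Int.cast : ℤ → ZMod N) (Set.Icc a b) := by
  intro x hx y hy hxy
  rw [ZMod.intCast_eq_intCast_iff_dvd_sub] at hxy
  have := Int.eq_zero_of_abs_lt_dvd hxy (abs_sub_lt_iff.mpr ⟨by linarith [hx.1, hy.2],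
    by linarith [hx.2, hy.1]⟩)
  linarith

lemma ZMod.natCast_add_self_eq_zero (m : ℕ) : (m : ZMod (2 * m)) + m = 0 := by
  rw [← Nat.cast_add, ← two_mul, ZMod.natCast_self]

namespace SimpleGraph

lemma neighborSet_circulantGraph {G : Type*} [AddCommGroup G] {s : Set G}
    (hs : ∀ x ∈ s, -x ∈ s) (a : G) :
    (circulantGraph s).neighborSet a = (a + ·) '' (s \ {0}) := by
  ext b
  simp only [mem_neighborSet, circulantGraph_adj, Set.mem_image, Set.mem_sdiff,
    Set.mem_singleton_iff]
  constructor
  · rintro ⟨hne, h⟩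
    refine ⟨b - a, ⟨?_, sub_ne_zero.mpr fun h => hne h.symm⟩, add_sub_cancel a b⟩
    rcases h with h | h
    · simpa using hs _ h
    · exact h
  · rintro ⟨d, ⟨hd, hd0⟩, rfl⟩
    exact ⟨by simpa using hd0, Or.inr (by simpa using hd)⟩

lemma card_neighborSet_circulantGraph {G : Type*} [AddCommGroup G] [DecidableEq G]
    {s : Finset G} (hs : ∀ x ∈ s, -x ∈ s) (a : G) :
    Nat.card ((circulantGraph (s : Set G)).neighborSet a) = #(s.erase 0) := by
  rw [neighborSet_circulantGraph hs, Nat.card_coe_set_eq,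
    Set.ncard_image_of_injective _ (add_right_injective a), ← coe_erase, Set.ncard_coe_finset]

lemma card_neighborSet_circulantGraph_intCast {N : ℕ} {T : Finset ℤ} {a b : ℤ}
    (hT : ∀ i ∈ T, a ≤ i ∧ i ≤ b) (hab : b - a < N) (h0 : 0 ∈ T)
    (hneg : ∀ i ∈ T, ∃ i' ∈ T, (i' : ZMod N) = -i) (v : ZMod N) :
    Nat.card ((circulantGraph ((T.image Int.cast : Finset (ZMod N)) : Set (ZMod N))).neighborSet
      v) = #T - 1 := by
  have hs : ∀ x ∈ T.image (Int.cast : ℤ → ZMod N), -x ∈ T.image Int.cast := by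
    rintro _ h
    obtain ⟨i, hi, rfl⟩ := mem_image.mp h
    obtain ⟨i', hi', h'⟩ := hneg i hi
    exact mem_image.mpr ⟨i', hi', h'⟩
  rw [card_neighborSet_circulantGraph hs,
    card_erase_of_mem (mem_image.mpr ⟨0, h0, Int.cast_zero⟩),
    card_image_of_injOn ((injOn_intCast_Icc hab).mono fun i hi => hT i hi)]

lemma card_neighborSet_circulantGraph_Icc {N j : ℕ} (hj : 2 * j < N) (v : ZMod N) :
    Nat.card ((circulantGraph (((Icc (-j : ℤ) j).image Int.cast : Finset (ZMod N)) :
      Set (ZMod N))).neighborSet v) = 2 * j := by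
  rw [card_neighborSet_circulantGraph_intCast (fun i hi => mem_Icc.mp hi) (by omega) (by simp)
    (fun i hi => ⟨-i, by simp only [mem_Icc] at hi ⊢; omega, Int.cast_neg i⟩), Int.card_Icc]
  omega

lemma card_neighborSet_circulantGraph_insert_Icc {m j : ℕ} (hj : j < m) (v : ZMod (2 * m)) :
    Nat.card ((circulantGraph (((insert (m : ℤ) (Icc (-j : ℤ) j)).image Int.cast :
      Finset (ZMod (2 * m))) : Set (ZMod (2 * m)))).neighborSet v) = 2 * j + 1 := by
  rw [card_neighborSet_circulantGraph_intCast (a := -j) (b := m) (fun i hi => ?_) (by omega)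
    (by simp) (fun i hi => ?_), card_insert_of_notMem (by rw [mem_Icc]; omega), Int.card_Icc]
  · omega
  · simp only [mem_insert, mem_Icc] at hi
    omega
  · rcases mem_insert.mp hi with rfl | hi
    · refine ⟨m, mem_insert_self _ _, ?_⟩
      rw [Int.cast_natCast]
      exact eq_neg_of_add_eq_zero_left (ZMod.natCast_add_self_eq_zero m)
    · exact ⟨-i, by simp only [mem_insert, mem_Icc] at hi ⊢; omega, Int.cast_neg i⟩

variable {V : Type*} (H : SimpleGraph V) (σ : V → V) (U : Set V)

/-- Delete the edges `{a, σ a}` with `a ∈ U` and join a new vertex `none` to every `a ∈ U`. -/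
def splitOff : SimpleGraph (Option V) where
  Adj
    | some a, some b => H.Adj a b ∧ ¬(a ∈ U ∧ b = σ a) ∧ ¬(b ∈ U ∧ a = σ b)
    | some a, none => a ∈ U
    | none, some b => b ∈ U
    | none, none => False
  symm := by
    constructor
    rintro (_ | a) (_ | b) h
    exacts [h, h, h, ⟨h.1.symm, h.2.2, h.2.1⟩]
  loopless := by
    constructor
    rintro (_ | a) h
    exacts [h, H.ne_of_adj h.1 rfl]

lemma neighborSet_splitOff_none : (H.splitOff σ U).neighborSet none = some '' U := by
  ext (_ | b) <;> simp [splitOff]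

variable {H σ U}

lemma card_neighborSet_splitOff_some [Finite V] (hσ : Function.Involutive σ)
    (hU : ∀ a ∈ U, σ a ∈ U) (hadj : ∀ a ∈ U, H.Adj a (σ a)) (a : V) :
    Nat.card ((H.splitOff σ U).neighborSet (some a)) = Nat.card (H.neighborSet a) := by
  simp only [Nat.card_coe_set_eq]
  by_cases ha : a ∈ U
  · have : (H.splitOff σ U).neighborSet (some a) =
        insert none (some '' (H.neighborSet a \ {σ a})) := by
      ext (_ | b)
      · simp [splitOff, ha]
      · simpa [splitOff, ha] using fun _ hb _ hab => hb (by rw [hab, hσ])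
    rw [this, Set.ncard_insert_of_notMem (by simp),
      Set.ncard_image_of_injective _ (Option.some_injective V),
      Set.ncard_sdiff_singleton_add_one (show σ a ∈ H.neighborSet a from hadj a ha)]
  · have : (H.splitOff σ U).neighborSet (some a) = some '' H.neighborSet a := by
      ext (_ | b)
      · simp [splitOff, ha]
      · simpa [splitOff, ha] using fun _ hb (hab : a = σ b) => ha (hab ▸ hU b hb)
    rw [this, Set.ncard_image_of_injective _ (Option.some_injective V)]

end SimpleGraph

noncomputable def antipodalPairs (m r : ℕ) : Finset (ZMod (2 * m)) :=
  (Ico 0 (r : ℤ) ∪ Ico (m : ℤ) (m + r)).image Int.cast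

lemma card_antipodalPairs {m r : ℕ} (hr : r ≤ m) : #(antipodalPairs m r) = 2 * r := by
  rw [antipodalPairs, card_image_of_injOn
      ((injOn_intCast_Icc (a := 0) (b := 2 * m - 1) (by omega)).mono fun i hi => by
        simp only [coe_union, coe_Ico, Set.mem_union, Set.mem_Ico] at hi
        simp only [Set.mem_Icc]
        omega),
    card_union_of_disjoint (disjoint_left.mpr fun i hi hi' => by
      simp only [mem_Ico] at hi hi'
      omega), Int.card_Ico, Int.card_Ico]
  omega

lemma add_mem_antipodalPairs {m r : ℕ} {a : ZMod (2 * m)}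
    (ha : a ∈ antipodalPairs m r) : a + m ∈ antipodalPairs m r := by
  simp only [antipodalPairs, mem_image, mem_union, mem_Ico] at ha ⊢
  obtain ⟨i, hi, rfl⟩ := ha
  rcases hi with hi | hi
  · exact ⟨i + m, by omega, by push_cast; rfl⟩
  · refine ⟨i - m, by omega, ?_⟩
    rw [Int.cast_sub, Int.cast_natCast, sub_eq_add_neg,
      neg_eq_of_add_eq_zero_left (ZMod.natCast_add_self_eq_zero m)]

variable {n : ℕ}

lemma dkDeg_eq_degree (g : SimpleGraph (Fin n)) [DecidableRel g.Adj] (v : Fin n) :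
    dkDeg g v = g.degree v := by
  rw [dkDeg, Nat.card_eq_fintype_card, card_neighborSet_eq_degree]

lemma sum_dkNk_filter (g : SimpleGraph (Fin n)) (P : ℕ → Prop) [DecidablePred P] :
    ∑ i ∈ univ.filter (fun i : Fin n => P i), dkNk g i = #{v | P (dkDeg g v)} := by
  classical
  have hlt (v : Fin n) : dkDeg g v < n := by
    rw [dkDeg_eq_degree]
    exact (g.degree_lt_card_verts v).trans_eq (Fintype.card_fin n)
  rw [card_eq_sum_card_fiberwise (f := fun v => (⟨dkDeg g v, hlt v⟩ : Fin n))
    (t := univ.filter (fun i : Fin n => P i)) (fun v hv => by simpa using hv)]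
  refine sum_congr rfl fun i hi => ?_
  rw [dkNk, Nat.card_eq_fintype_card, Fintype.card_subtype]
  congr 1
  ext v
  simp only [mem_filter, mem_univ, true_and] at hi ⊢
  constructor
  · intro h
    exact ⟨h ▸ hi, Fin.ext h⟩
  · rintro ⟨-, rfl⟩
    rfl

lemma dkNk_comap {V : Type*} (G : SimpleGraph V) (e : Fin n ≃ V) (k : ℕ) :
    dkNk (G.comap e) k = Nat.card {v // Nat.card (G.neighborSet v) = k} :=
  Nat.card_congr <| e.subtypeEquiv fun v => by
    have : Nat.card ((G.comap e).neighborSet v) = Nat.card (G.neighborSet (e v)) :=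
      Nat.card_congr (e.subtypeEquiv fun _ => Iff.rfl)
    rw [dkDeg, this]

def oddPart (x : Fin n → ℝ) : Fin n → ℝ := fun i => if Odd (i : ℕ) then x i else 0

def evenPart (x : Fin n → ℝ) : Fin n → ℝ := fun i => if Odd (i : ℕ) then 0 else x i

lemma oddPart_add_evenPart (x : Fin n → ℝ) : oddPart x + evenPart x = x := by
  ext i
  by_cases hi : Odd (i : ℕ) <;> simp [oddPart, evenPart, hi]

lemma sum_evenPart (x : Fin n → ℝ) : ∑ i, evenPart x i = ∑ i, x i - ∑ i, oddPart x i := by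
  conv_rhs => enter [1, 2, i]; rw [← oddPart_add_evenPart x]
  simp only [Pi.add_apply, sum_add_distrib, add_sub_cancel_left]

lemma oddPart_nonneg {x : Fin n → ℝ} (hx : ∀ i, 0 ≤ x i) (i : Fin n) : 0 ≤ oddPart x i := by
  unfold oddPart
  split_ifs
  exacts [hx i, le_rfl]

lemma evenPart_nonneg {x : Fin n → ℝ} (hx : ∀ i, 0 ≤ x i) (i : Fin n) : 0 ≤ evenPart x i := by
  unfold evenPart
  split_ifs
  exacts [le_rfl, hx i]

def handshakePolytope (n : ℕ) : Set (Fin n → ℝ) :=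
  {x | (∀ i, 0 ≤ x i) ∧ ∑ i, x i = n ∧ ∑ i, oddPart x i ≤ n - 1}

def handshakeVertices (n : ℕ) : Set (Fin n → ℝ) :=
  {x : Fin n → ℝ | ∃ l : Fin n, Even (l : ℕ) ∧
      x = fun i => if i = l then (n : ℝ) else 0} ∪
  {x : Fin n → ℝ | ∃ k l : Fin n, Odd (k : ℕ) ∧ Even (l : ℕ) ∧
      x = fun i => if i = k then ((n : ℝ) - 1) else if i = l then 1 else 0}

lemma convex_handshakePolytope : Convex ℝ (handshakePolytope n) := by
  rintro x ⟨hx0, hx1, hx2⟩ y ⟨hy0, hy1, hy2⟩ a b ha hb hab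
  simp only [oddPart, sum_ite, sum_const_zero, add_zero] at hx2 hy2
  refine ⟨fun i => ?_, ?_, ?_⟩ <;>
    simp only [oddPart, sum_ite, sum_const_zero, add_zero, Pi.add_apply, Pi.smul_apply,
      smul_eq_mul, sum_add_distrib, ← mul_sum]
  · exact add_nonneg (mul_nonneg ha (hx0 i)) (mul_nonneg hb (hy0 i))
  · rw [hx1, hy1]
    linear_combination (n : ℝ) * hab
  · nlinarith [mul_le_mul_of_nonneg_left hx2 ha, mul_le_mul_of_nonneg_left hy2 hb]

lemma dkVec_mem_handshakePolytope (hn : Odd n) (g : SimpleGraph (Fin n)) :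
    dkVec g ∈ handshakePolytope n := by
  classical
  have htotal : ∑ i : Fin n, dkNk g i = n := by
    simpa using sum_dkNk_filter g (fun _ => True)
  have hodd : Even (∑ i ∈ univ.filter (fun i : Fin n => Odd (i : ℕ)), dkNk g i) := by
    rw [sum_dkNk_filter]
    simpa [dkDeg_eq_degree] using g.even_card_odd_degree_vertices
  have hle : ∑ i ∈ univ.filter (fun i : Fin n => Odd (i : ℕ)), dkNk g i ≤ n :=
    (sum_le_sum_of_subset (filter_subset _ _)).trans_eq htotal
  refine ⟨fun i => Nat.cast_nonneg _, by simp [dkVec, ← htotal], ?_⟩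
  have : ∑ i ∈ univ.filter (fun i : Fin n => Odd (i : ℕ)), dkNk g i ≤ n - 1 := by
    obtain ⟨c, hc⟩ := hn
    obtain ⟨d, hd⟩ := hodd
    omega
  simp only [oddPart, sum_ite, sum_const_zero, add_zero, dkVec, ← Nat.cast_sum]
  exact (Nat.cast_le.mpr this).trans_eq (by rw [Nat.cast_sub hn.pos, Nat.cast_one])

lemma mem_convexHull_handshakeVertices_of_odd_eq_zero {y : Fin n → ℝ} (hn : 0 < n)
    (hy : ∀ i, 0 ≤ y i) (hodd : ∀ i : Fin n, Odd (i : ℕ) → y i = 0) (hsum : ∑ i, y i = n) :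
    y ∈ convexHull ℝ (handshakeVertices n) := by
  refine convexHull_mono ?_ (mem_convexHull_piSingle (fun i : Fin n => Even (i : ℕ))
    (Nat.cast_pos.mpr hn) hy (fun i hi => hodd i (Nat.not_even_iff_odd.mp hi)) hsum)
  rintro _ ⟨l, hl, rfl⟩
  exact Or.inl ⟨l, hl, funext fun i => Pi.single_apply l (n : ℝ) i⟩

lemma add_mem_convexHull_handshakeVertices {u w : Fin n → ℝ} (hn : 1 < n)
    (hu : ∀ i, 0 ≤ u i) (heven : ∀ i : Fin n, Even (i : ℕ) → u i = 0) (hu_sum : ∑ i, u i = n - 1)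
    (hw : ∀ i, 0 ≤ w i) (hodd : ∀ i : Fin n, Odd (i : ℕ) → w i = 0) (hw_sum : ∑ i, w i = 1) :
    u + w ∈ convexHull ℝ (handshakeVertices n) := by
  have hu_mem := mem_convexHull_piSingle (fun i : Fin n => Odd (i : ℕ))
    (by linarith [(Nat.one_lt_cast (α := ℝ)).mpr hn]) hu
    (fun i hi => heven i (Nat.not_odd_iff_even.mp hi)) hu_sum
  have hw_mem := mem_convexHull_piSingle (fun i : Fin n => Even (i : ℕ)) one_pos hw
    (fun i hi => hodd i (Nat.not_even_iff_odd.mp hi)) hw_sum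
  have huw := Set.add_mem_add hu_mem hw_mem
  rw [← convexHull_add] at huw
  refine convexHull_mono ?_ huw
  rintro _ ⟨_, ⟨k, hk, rfl⟩, _, ⟨l, hl, rfl⟩, rfl⟩
  have hkl : k ≠ l := fun h => Nat.not_even_iff_odd.mpr hk (h ▸ hl)
  refine Or.inr ⟨k, l, hk, hl, funext fun i => ?_⟩
  by_cases hik : i = k
  · simp [hik, hkl]
  · simp [hik, Pi.single_apply]

lemma smul_evenPart_mem_convexHull {x : Fin n → ℝ} (hx : x ∈ handshakePolytope n) :
    ((n : ℝ) / (n - ∑ i, oddPart x i)) • evenPart x ∈ convexHull ℝ (handshakeVertices n) := by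
  obtain ⟨hx0, hxsum, hxodd⟩ := hx
  have hs0 : 0 ≤ ∑ i, oddPart x i := sum_nonneg fun i _ => oddPart_nonneg hx0 i
  have hA : 0 < (n : ℝ) - ∑ i, oddPart x i := by linarith
  refine mem_convexHull_handshakeVertices_of_odd_eq_zero ((Nat.cast_pos (α := ℝ)).mp (by linarith))
    (fun i => mul_nonneg (by positivity) (evenPart_nonneg hx0 i))
    (fun i hi => by simp [evenPart, hi]) ?_
  simp only [Pi.smul_apply, smul_eq_mul, ← mul_sum, sum_evenPart, hxsum]
  field_simp

lemma smul_oddPart_add_smul_evenPart_mem_convexHull {x : Fin n → ℝ}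
    (hx : x ∈ handshakePolytope n) (hs : 0 < ∑ i, oddPart x i) :
    (((n : ℝ) - 1) / ∑ i, oddPart x i) • oddPart x +
      (1 / ((n : ℝ) - ∑ i, oddPart x i)) • evenPart x ∈ convexHull ℝ (handshakeVertices n) := by
  obtain ⟨hx0, hxsum, hxodd⟩ := hx
  have hA : 0 < (n : ℝ) - ∑ i, oddPart x i := by linarith
  refine add_mem_convexHull_handshakeVertices (by exact_mod_cast (by linarith : (1 : ℝ) < n))
    (fun i => mul_nonneg (div_nonneg (by linarith) hs.le) (oddPart_nonneg hx0 i))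
    (fun i hi => by simp [oddPart, Nat.not_odd_iff_even.mpr hi]) ?_
    (fun i => mul_nonneg (by positivity) (evenPart_nonneg hx0 i))
    (fun i hi => by simp [evenPart, hi]) ?_ <;>
  simp only [Pi.smul_apply, smul_eq_mul, ← mul_sum, sum_evenPart, hxsum] <;>
  field_simp

lemma handshakePolytope_subset_convexHull :
    handshakePolytope n ⊆ convexHull ℝ (handshakeVertices n) := by
  intro x hx
  have ⟨hx0, hxsum, hxodd⟩ := hx
  have hp := smul_evenPart_mem_convexHull hx
  rcases (sum_nonneg fun i _ => oddPart_nonneg hx0 i).eq_or_lt with hs | hs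
  · have hodd : oddPart x = 0 := funext fun i =>
      (sum_eq_zero_iff_of_nonneg fun j _ => oddPart_nonneg hx0 j).mp hs.symm i (mem_univ i)
    have hn : (n : ℝ) ≠ 0 := by linarith
    rwa [← hs, sub_zero, div_self hn, one_smul, ← zero_add (evenPart x), ← hodd,
      oddPart_add_evenPart] at hp
  have hq := smul_oddPart_add_smul_evenPart_mem_convexHull hx hs
  set s := ∑ i, oddPart x i
  -- of the two points, only `hq`'s has odd coordinates, with total `n - 1`; weighting it by
  -- `s / (n - 1)` recovers the odd part of `x`, and the even parts then match since `∑ x = n`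
  have hn1 : 0 < (n : ℝ) - 1 := hs.trans_le hxodd
  have hA : 0 < (n : ℝ) - s := by linarith
  set τ := s / ((n : ℝ) - 1)
  convert (convex_convexHull ℝ _) hp hq (sub_nonneg.mpr (div_le_one_of_le₀ hxodd hn1.le))
    (show 0 ≤ τ by positivity) (sub_add_cancel 1 τ) using 1
  ext i
  by_cases hi : Odd (i : ℕ)
  · simp [evenPart, oddPart, hi, τ]
    field_simp
  · simp [evenPart, oddPart, hi, τ]
    field_simp
    ring

lemma mem_exposedPoints_of_mem_handshakeVertices {x : Fin n → ℝ}
    (hxV : x ∈ handshakeVertices n) (hxQ : x ∈ handshakePolytope n) :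
    x ∈ (handshakePolytope n).exposedPoints ℝ := by
  rcases hxV with ⟨l, -, rfl⟩ | ⟨k, l, hk, hl, rfl⟩
  · refine ⟨hxQ, ContinuousLinearMap.proj l, fun y ⟨hy0, hysum, _⟩ => ?_⟩
    have hyl : y l ≤ n := hysum ▸ single_le_sum (fun j _ => hy0 j) (mem_univ l)
    refine ⟨by simpa using hyl, fun hyl' => ?_⟩
    simp only [ContinuousLinearMap.proj_apply, if_pos] at hyl'
    ext i
    by_cases hil : i = l
    · simp [hil, le_antisymm hyl hyl']
    · simpa [hil] using eq_zero_of_sum_le_sum hy0 (t := {l}) (by rw [sum_singleton]; linarith)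
        (by simpa using hil)
  · have hkl : k ≠ l := fun h => Nat.not_even_iff_odd.mpr hk (h ▸ hl)
    have hn : (2 : ℝ) ≤ n := by
      have := k.isLt
      obtain ⟨c, hc⟩ := hk
      exact_mod_cast (by omega : 2 ≤ n)
    -- on the polytope `x_k ≤ n - 1` and `x_k + x_l ≤ n`, so `n x_k + x_l` is maximal only here
    refine ⟨hxQ, (n : ℝ) • ContinuousLinearMap.proj k + ContinuousLinearMap.proj l,
      fun y ⟨hy0, hysum, hyodd⟩ => ?_⟩
    have hyk : y k ≤ n - 1 := by
      simpa [oddPart, hk] using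
        (single_le_sum (fun j _ => oddPart_nonneg hy0 j) (mem_univ k)).trans hyodd
    have hykl : y k + y l ≤ n := by
      rw [← sum_pair hkl, ← hysum]
      exact sum_le_sum_of_subset_of_nonneg (subset_univ _) fun j _ _ => hy0 j
    simp only [add_apply, smul_apply, ContinuousLinearMap.proj_apply, smul_eq_mul, if_pos,
      if_neg hkl.symm]
    refine ⟨by nlinarith, fun hmax => ?_⟩
    have hyk' : y k = n - 1 := by nlinarith
    have hyl' : y l = 1 := by rw [hyk'] at hmax; linarith
    ext i
    by_cases hik : i = k
    · simp [hik, hyk']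
    by_cases hil : i = l
    · simp [hil, hkl.symm, hyl']
    · simpa [hik, hil] using eq_zero_of_sum_le_sum hy0 (t := {k, l})
        (by rw [sum_pair hkl]; linarith) (by simp [hik, hil])

lemma exists_dkVec_eq_of_even {l : Fin n} (hl : Even (l : ℕ)) :
    ∃ g : SimpleGraph (Fin n), dkVec g = fun i => if i = l then (n : ℝ) else 0 := by
  obtain ⟨j, hj⟩ := hl
  have hln := l.isLt
  have : NeZero n := ⟨by omega⟩
  refine ⟨(circulantGraph (((Icc (-j : ℤ) j).image Int.cast : Finset (ZMod n)) :
    Set (ZMod n))).comap (ZMod.finEquiv n).toEquiv, funext fun i => ?_⟩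
  rw [dkVec, dkNk_comap]
  have hjl : 2 * j = l := by omega
  simp only [card_neighborSet_circulantGraph_Icc (by omega : 2 * j < n), hjl, Fin.val_inj,
    eq_comm (a := l)]
  split_ifs with hil <;> simp [hil]

lemma exists_dkVec_eq_of_odd (hn : Odd n) {k l : Fin n} (hk : Odd (k : ℕ)) (hl : Even (l : ℕ)) :
    ∃ g : SimpleGraph (Fin n),
      dkVec g = fun i => if i = k then (n : ℝ) - 1 else if i = l then 1 else 0 := by
  obtain ⟨m, rfl⟩ := hn
  obtain ⟨j, hj⟩ := hk
  obtain ⟨r, hr⟩ := hl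
  have hkn := k.isLt
  have hln := l.isLt
  have : NeZero (2 * m) := ⟨by omega⟩
  have hm0 : (m : ZMod (2 * m)) ≠ 0 := by
    rw [Ne, ZMod.natCast_eq_zero_iff]
    exact fun h => by have := Nat.le_of_dvd (by omega) h; omega
  -- a `(2j+1)`-regular circulant graph containing the perfect matching `{a, a + m}`
  set H := circulantGraph (((insert (m : ℤ) (Icc (-j : ℤ) j)).image Int.cast :
    Finset (ZMod (2 * m))) : Set (ZMod (2 * m)))
  have hH (a : ZMod (2 * m)) : Nat.card (H.neighborSet a) = 2 * j + 1 :=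
    card_neighborSet_circulantGraph_insert_Icc (by omega) a
  have hadj (a : ZMod (2 * m)) : H.Adj a (a + m) := by simp [H, hm0]
  have hσ : Function.Involutive (· + (m : ZMod (2 * m))) := fun a => by
    simp only [add_assoc, ZMod.natCast_add_self_eq_zero, add_zero]
  refine ⟨(H.splitOff (· + (m : ZMod (2 * m))) (antipodalPairs m r)).comap
    (Fintype.equivOfCardEq (by simp [ZMod.card])), funext fun i => ?_⟩
  rw [dkVec, dkNk_comap, Nat.card_subtype_option, neighborSet_splitOff_none, Nat.card_coe_set_eq,
    Set.ncard_image_of_injective _ (Option.some_injective _), Set.ncard_coe_finset,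
    card_antipodalPairs (by omega)]
  simp only [card_neighborSet_splitOff_some hσ (fun _ => add_mem_antipodalPairs)
    (fun a _ => hadj a), hH]
  have hdegk : 2 * j + 1 = (i : ℕ) ↔ i = k := by rw [Fin.ext_iff]; omega
  have hdegl : 2 * r = (i : ℕ) ↔ i = l := by rw [Fin.ext_iff]; omega
  have hkl : k ≠ l := by rintro rfl; omega
  simp only [hdegk, hdegl]
  by_cases hik : i = k
  · simp [hik, hkl]
  · split_ifs <;> simp [hik]

lemma handshakeVertices_subset_range_dkVec (hn : Odd n) :
    handshakeVertices n ⊆ {x | ∃ g : SimpleGraph (Fin n), x = dkVec g} := by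
  rintro _ (⟨l, hl, rfl⟩ | ⟨k, l, hk, hl, rfl⟩)
  · obtain ⟨g, hg⟩ := exists_dkVec_eq_of_even hl
    exact ⟨g, hg.symm⟩
  · obtain ⟨g, hg⟩ := exists_dkVec_eq_of_odd hn hk hl
    exact ⟨g, hg.symm⟩

/-- for `n` odd, the extreme points of the convex hull of the
degree-count vectors are exactly the `n·e_l` (`l` even) and the
`(n-1)·e_k + e_l` (`k` odd, `l` even). -/
theorem stmt11 (n : ℕ) (hn : Odd n) :
    Set.extremePoints ℝ
        (convexHull ℝ {x : Fin n → ℝ | ∃ g : SimpleGraph (Fin n), x = dkVec g})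
      = {x : Fin n → ℝ | ∃ l : Fin n, Even (l : ℕ) ∧
            x = fun i => if i = l then (n : ℝ) else 0} ∪
        {x : Fin n → ℝ | ∃ k l : Fin n, Odd (k : ℕ) ∧ Even (l : ℕ) ∧
            x = fun i => if i = k then ((n : ℝ) - 1) else if i = l then 1 else 0} := by
  set S := {x : Fin n → ℝ | ∃ g : SimpleGraph (Fin n), x = dkVec g}
  have hSQ : S ⊆ handshakePolytope n := by
    rintro _ ⟨g, rfl⟩
    exact dkVec_mem_handshakePolytope hn g
  have hVS : handshakeVertices n ⊆ S := handshakeVertices_subset_range_dkVec hn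
  have hhull : convexHull ℝ S = convexHull ℝ (handshakeVertices n) :=
    (convexHull_min (hSQ.trans handshakePolytope_subset_convexHull)
      (convex_convexHull ℝ _)).antisymm (convexHull_mono hVS)
  change _ = handshakeVertices n
  refine Set.Subset.antisymm (hhull ▸ extremePoints_convexHull_subset) fun x hx => ?_
  exact inter_extremePoints_subset_extremePoints_of_subset
    (convexHull_min hSQ convex_handshakePolytope)
    ⟨subset_convexHull ℝ S (hVS hx), exposedPoints_subset_extremePoints
      (mem_exposedPoints_of_mem_handshakeVertices hx (hSQ (hVS hx)))⟩
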